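/- There exists a bounded microscopic set M ⊆ ℝ which does not admit a cover of lower asymptotic density zero; that is, there exists ε > 0 such that for every D ⊆ ℕ with d̲(D) = 0 and every sequence of intervals (J_d)_{d∈D} with |J_d| ≤ ε^(d+1) for all d ∈ D, M is not contained in ⋃_{d∈D} J_d. -/

import Mathlib

open MeasureTheory Filter

/-- `S ⊆ ℝ` is an interval. -/
def IsIntervalSet (S : Set ℝ) : Prop := S.OrdConnected

/-- A set `M ⊆ ℝ` is microscopic if for each `ε > 0` there is a sequence of intervals
`(J n)` covering `M` with `|J n| ≤ ε ^ (n + 1)` for each `n`. -/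
def Microscopic (M : Set ℝ) : Prop :=
  ∀ ε : ℝ, 0 < ε → ∃ J : ℕ → Set ℝ,
    (∀ n, IsIntervalSet (J n)) ∧ M ⊆ (⋃ n, J n) ∧
      ∀ n, volume (J n) ≤ ENNReal.ofReal (ε ^ (n + 1))

/-- The lower asymptotic density of `A ⊆ ℕ`. -/
noncomputable def lowerDensity (A : Set ℕ) : ℝ :=
  liminf (fun j : ℕ => ((A ∩ Set.Iic j).ncard : ℝ) / ((j : ℝ) + 1)) atTop

namespace MicroHard

noncomputable section

/-- the dyadic grid enumeration: for `2^j ≤ n < 2^(j+1)`, `aSeq n = (n - 2^j)/2^j`. -/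
def aSeq (n : ℕ) : ℝ := ((n - 2 ^ Nat.log 2 n : ℕ) : ℝ) * (1/2 : ℝ) ^ Nat.log 2 n

/-- the hard microscopic set. -/
def M : Set ℝ :=
  {x | ∀ k : ℕ, ∃ n : ℕ, aSeq n < x ∧ x < aSeq n + (1/2 : ℝ) ^ ((k+1)*(n+1))}

lemma aSeq_nonneg (n : ℕ) : 0 ≤ aSeq n := by
  unfold aSeq; positivity

lemma aSeq_lt_one (n : ℕ) : aSeq n < 1 := by
  unfold aSeq
  rcases Nat.eq_zero_or_pos n with h | h
  · subst h; norm_num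
  have h1 : (2:ℕ) ^ Nat.log 2 n ≤ n := Nat.pow_log_le_self 2 h.ne'
  have h2 : n < 2 ^ (Nat.log 2 n + 1) := Nat.lt_pow_succ_log_self (by norm_num) n
  set j := Nat.log 2 n
  have hr : (n - 2 ^ j : ℕ) < 2 ^ j := by
    have : 2 ^ (j+1) = 2 ^ j + 2 ^ j := by ring
    omega
  have hrR : ((n - 2 ^ j : ℕ) : ℝ) < (2:ℝ) ^ j := by
    exact_mod_cast lt_of_lt_of_le hr (le_of_eq (by push_cast; ring))
  calc ((n - 2 ^ j : ℕ) : ℝ) * (1/2 : ℝ) ^ j < 2^j * (1/2:ℝ)^j :=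
        mul_lt_mul_of_pos_right hrR (by positivity)
    _ = 1 := by rw [one_div, inv_pow, mul_inv_cancel₀ (by positivity)]

lemma aSeq_spec {j r : ℕ} (hr : r < 2 ^ j) : aSeq (2 ^ j + r) = (r : ℝ) * (1/2 : ℝ) ^ j := by
  have hlog : Nat.log 2 (2 ^ j + r) = j := by
    apply Nat.log_eq_of_pow_le_of_lt_pow (by omega)
    have : 2 ^ (j+1) = 2 ^ j + 2 ^ j := by ring
    omega
  unfold aSeq
  rw [hlog]
  congr 2
  omega

lemma M_subset : M ⊆ Set.Icc 0 2 := by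
  intro x hx
  obtain ⟨n, h1, h2⟩ := hx 0
  constructor
  · exact le_of_lt (lt_of_le_of_lt (aSeq_nonneg n) h1)
  · have : (1/2:ℝ) ^ ((0+1)*(n+1)) ≤ 1 := by
      apply pow_le_one₀ <;> norm_num
    have := aSeq_lt_one n
    linarith

lemma M_bounded : Bornology.IsBounded M :=
  (Metric.isBounded_Icc (0:ℝ) 2).subset M_subset

lemma M_microscopic : Microscopic M := by
  intro ε hε
  obtain ⟨k, hk⟩ := exists_pow_lt_of_lt_one hε (by norm_num : (1/2:ℝ) < 1)
  refine ⟨fun n => Set.Ioo (aSeq n) (aSeq n + (1/2:ℝ) ^ ((k+1)*(n+1))), fun n => Set.ordConnected_Ioo, ?_, ?_⟩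
  · intro x hx
    obtain ⟨n, h1, h2⟩ := hx k
    exact Set.mem_iUnion.2 ⟨n, h1, h2⟩
  · intro n
    rw [Real.volume_Ioo]
    have h1 : (1/2:ℝ) ^ ((k+1)*(n+1)) = ((1/2:ℝ)^(k+1))^(n+1) := by rw [← pow_mul]
    have h2 : ((1/2:ℝ)^(k+1)) ≤ ε := by
      calc ((1/2:ℝ)^(k+1)) ≤ (1/2:ℝ)^k := by
            apply pow_le_pow_of_le_one <;> norm_num
        _ ≤ ε := le_of_lt hk
    have h3 : (1/2:ℝ) ^ ((k+1)*(n+1)) ≤ ε ^ (n+1) := by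
      rw [h1]
      exact pow_le_pow_left₀ (by positivity) h2 _
    simp only [add_sub_cancel_left]
    exact ENNReal.ofReal_le_ofReal h3

/-- diameter bound for an interval of bounded volume -/
lemma interval_diam {S : Set ℝ} (hS : S.OrdConnected) {L : ℝ} (hL : 0 ≤ L)
    (hvol : volume S ≤ ENNReal.ofReal L) {y z : ℝ} (hy : y ∈ S) (hz : z ∈ S) :
    |y - z| ≤ L := by
  wlog h : y ≤ z generalizing y z
  · rw [abs_sub_comm]; exact this hz hy (le_of_not_ge h)
  have hsub : Set.Icc y z ⊆ S := hS.out hy hz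
  have : volume (Set.Icc y z) ≤ ENNReal.ofReal L := le_trans (measure_mono hsub) hvol
  rw [Real.volume_Icc] at this
  have hzy : z - y ≤ L := (ENNReal.ofReal_le_ofReal_iff hL).1 this
  rw [abs_sub_comm, abs_of_nonneg (by linarith)]
  exact hzy

/-- dips from lower density zero -/
lemma dips {D : Set ℕ} (hD : lowerDensity D = 0) (δ : ℝ) (hδ : 0 < δ) (N : ℕ) :
    ∃ m : ℕ, N ≤ m ∧ ((D ∩ Set.Iic m).ncard : ℝ) < δ * ((m : ℝ) + 1) := by
  have hbd : IsCoboundedUnder (· ≥ ·) atTop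
      (fun j : ℕ => ((D ∩ Set.Iic j).ncard : ℝ) / ((j : ℝ) + 1)) := by
    apply Filter.IsBoundedUnder.isCoboundedUnder_ge
    refine ⟨1, Filter.eventually_map.2 (Filter.Eventually.of_forall fun (j : ℕ) => ?_)⟩
    have h1 : (D ∩ Set.Iic j).ncard ≤ (Set.Iic j).ncard :=
      Set.ncard_le_ncard Set.inter_subset_right (Set.finite_Iic j)
    have h2 : (Set.Iic j).ncard = j + 1 := by
      rw [show Set.Iic j = ↑(Finset.Iic j) by simp, Set.ncard_coe_finset]
      simp
    have : ((D ∩ Set.Iic j).ncard : ℝ) ≤ (j : ℝ) + 1 := by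
      have := h1.trans_eq h2
      exact_mod_cast this
    show ((D ∩ Set.Iic j).ncard : ℝ) / ((j : ℝ) + 1) ≤ 1
    rw [div_le_one (by positivity)]
    exact this
  have hfreq : ∃ᶠ j in atTop,
      ((D ∩ Set.Iic j).ncard : ℝ) / ((j : ℝ) + 1) < δ := by
    apply frequently_lt_of_liminf_lt hbd
    rw [← lowerDensity, hD]; exact hδ
  obtain ⟨m, hm, hlt⟩ := (Filter.frequently_atTop.1 hfreq) N
  refine ⟨m, hm, ?_⟩
  rw [div_lt_iff₀ (by positivity)] at hlt
  linarith

/-- state invariant for the nested-interval construction -/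
def Inv (D : Set ℕ) (J : ℕ → Set ℝ) (c : ℝ) (B : ℕ) : Prop :=
  4 ≤ B ∧ 0 ≤ c ∧ c + (1/2:ℝ)^B ≤ 1 ∧
  ∀ d ∈ D, 10*(d+1) ≤ 2*B → J d ∩ Set.Icc c (c + (1/2:ℝ)^B) = ∅

lemma aux_pow_ge : ∀ i : ℕ, 4 ≤ i → 10*(i+1) ≤ 2^(i+2) := by
  intro i hi
  induction i with
  | zero => omega
  | succ k ih =>
    rcases Nat.lt_or_ge k 4 with h | h
    · interval_cases k <;> simp_all <;> omega
    · have := ih (by omega)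
      have h2 : (2:ℕ)^(k+2) ≥ 10 := by
        calc (2:ℕ)^(k+2) ≥ 2^(4+2) := Nat.pow_le_pow_right (by norm_num) (by omega)
          _ ≥ 10 := by norm_num
      calc 10*(k+1+1) = 10*(k+1) + 10 := by ring
        _ ≤ 2^(k+2) + 2^(k+2) := by omega
        _ = 2^(k+1+2) := by ring


lemma hhf_exists (tpl : ℕ) : ∃ H : ℕ → ℕ,
    (∀ i, 4 ≤ i → i + 1 ≤ H i) ∧
    (∀ i, H i ≤ (tpl+1) * 2^(i+1)) ∧
    (∀ i d, 10*(d+1) ≤ 2*(tpl+1)*2^(i+1) + 4 → d + 1 ≤ H i) := by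
  refine ⟨fun i => (2*(tpl+1)*2^(i+1) + 4)/10, ?_, ?_, ?_⟩
  · intro i hi
    rw [Nat.le_div_iff_mul_le (by norm_num)]
    have h1 := aux_pow_ge i hi
    have h2 : (2:ℕ)^(i+2) ≤ 2*(tpl+1)*2^(i+1) := by
      have he : (2:ℕ)^(i+2) = 2*2^(i+1) := by ring
      rw [he]
      have : 2*2^(i+1) ≤ 2*(tpl+1)*2^(i+1) := by
        have : (2:ℕ)*(tpl+1) ≥ 2 := by omega
        exact Nat.mul_le_mul_right _ this
      omega
    omega
  · intro i
    apply Nat.div_le_of_le_mul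
    have hX : 0 < (tpl+1) * 2^(i+1) := by positivity
    nlinarith [hX]
  · intro i d h
    rw [Nat.le_div_iff_mul_le (by norm_num)]
    omega

lemma find_level (H : ℕ → ℕ) (Hge : ∀ i, 4 ≤ i → i + 1 ≤ H i) (B m : ℕ) (hB : 4 ≤ B)
    (hm : H (B+6) ≤ m) : ∃ j, B + 6 ≤ j ∧ H j ≤ m ∧ m < H (j+1) := by
  classical
  have hB6m : B + 6 ≤ m := by
    have := Hge (B+6) (by omega)
    omega
  refine ⟨Nat.findGreatest (fun i => H i ≤ m) m, ?_, ?_, ?_⟩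
  · exact Nat.le_findGreatest hB6m hm
  · exact Nat.findGreatest_spec (P := fun i => H i ≤ m) (n := m) hB6m hm
  · set j := Nat.findGreatest (fun i => H i ≤ m) m with hj
    have hjP : H j ≤ m := Nat.findGreatest_spec (P := fun i => H i ≤ m) (n := m) hB6m hm
    have hj1 : B + 6 ≤ j := Nat.le_findGreatest hB6m hm
    have hjm : j < m := by
      have := Hge j (by omega)
      omega
    by_contra h
    push_neg at h
    exact Nat.findGreatest_is_greatest (lt_add_one j) (by omega) h

set_option maxHeartbeats 1000000 in
lemma dive {D : Set ℕ} {J : ℕ → Set ℝ}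
    (hJint : ∀ d ∈ D, (J d).OrdConnected)
    (hJvol : ∀ d ∈ D, volume (J d) ≤ ENNReal.ofReal ((1/2:ℝ)^(10*(d+1))))
    (hdip : ∀ δ : ℝ, 0 < δ → ∀ N : ℕ, ∃ m, N ≤ m ∧ ((D ∩ Set.Iic m).ncard : ℝ) < δ * ((m:ℝ)+1))
    (tpl : ℕ) {c : ℝ} {B : ℕ} (hI : Inv D J c B) :
    ∃ (c' : ℝ) (B' : ℕ), Inv D J c' B' ∧ B < B' ∧
      Set.Icc c' (c' + (1/2:ℝ)^B') ⊆ Set.Icc c (c + (1/2:ℝ)^B) ∧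
      ∃ n : ℕ, B' = (tpl+1)*(n+1)+2 ∧
        Set.Icc c' (c' + (1/2:ℝ)^B') ⊆
          Set.Ioo (aSeq n) (aSeq n + (1/2:ℝ)^((tpl+1)*(n+1))) := by
  classical
  obtain ⟨hB4, hc0, hc1, hinv⟩ := hI
  set el : ℝ := (1/2:ℝ)^B with hel_def
  have hel_pos : 0 < el := by positivity
  -- the scale thresholds
  obtain ⟨hhf, hhf_ge, hhf_le, hhf_mem⟩ := hhf_exists tpl
  -- get the dip
  set δ : ℝ := (1/2:ℝ)^(B+8) / (tpl+1) with hδ_def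
  have hδ_pos : 0 < δ := by
    apply div_pos (by positivity)
    exact_mod_cast Nat.succ_pos tpl
  obtain ⟨m, hm1, hm2⟩ := hdip δ hδ_pos (hhf (B+6))
  obtain ⟨j, hj1, hjP, hj2⟩ := find_level hhf hhf_ge B m hB4 hm1
  -- real scales
  set g : ℝ := (1/2:ℝ)^j with hg_def
  have hg_pos : 0 < g := by positivity
  have e1 : (1/2:ℝ)^j * 2^j = 1 := by
    rw [one_div, inv_pow, inv_mul_cancel₀ (by positivity)]
  have hgel : 64 * g ≤ el := by
    have : (1/2:ℝ)^j ≤ (1/2:ℝ)^(B+6) := by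
      apply pow_le_pow_of_le_one (by norm_num) (by norm_num) (by omega)
    have h2 : (1/2:ℝ)^(B+6) = el * (1/2)^6 := by
      rw [hel_def, ← pow_add]
    rw [hg_def]
    rw [h2] at this
    nlinarith
  -- the blocking set
  set F : Finset ℕ :=
    (Finset.range (hhf j)).filter (fun d => d ∈ D ∧ ¬(10*(d+1) ≤ 2*B)) with hF_def
  have hFD : ∀ d ∈ F, d ∈ D := by
    intro d hd
    simp only [hF_def, Finset.mem_filter] at hd
    exact hd.2.1
  have hFnew : ∀ d ∈ F, 2*B < 10*(d+1) := by
    intro d hd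
    simp only [hF_def, Finset.mem_filter] at hd
    omega
  have hFrange : ∀ d ∈ F, d < hhf j := by
    intro d hd
    simp only [hF_def, Finset.mem_filter, Finset.mem_range] at hd
    exact hd.1
  -- card bound
  have hFcard : (F.card : ℝ) < δ * ((m:ℝ)+1) := by
    have hsub : (↑F : Set ℕ) ⊆ D ∩ Set.Iic m := by
      intro d hd
      simp only [Finset.coe_filter, Set.mem_setOf_eq, hF_def] at hd
      rcases hd with ⟨hd1, hd2, _⟩
      refine ⟨hd2, ?_⟩
      simp only [Set.mem_Iic]
      have := Finset.mem_range.1 hd1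
      omega
    have h1 : F.card ≤ (D ∩ Set.Iic m).ncard := by
      rw [← Set.ncard_coe_finset]
      exact Set.ncard_le_ncard hsub ((Set.finite_Iic m).inter_of_right D)
    calc (F.card : ℝ) ≤ ((D ∩ Set.Iic m).ncard : ℝ) := by exact_mod_cast h1
      _ < δ * ((m:ℝ)+1) := hm2
  have hmB : ((m:ℝ)+1) ≤ (tpl+1) * 2^(j+2) := by
    have h1 : m + 1 ≤ hhf (j+1) := hj2
    have h2 : hhf (j+1) ≤ (tpl+1) * 2^(j+2) := hhf_le (j+1)
    have : ((m:ℕ)+1 : ℕ) ≤ ((tpl+1) * 2^(j+2) : ℕ) := le_trans h1 h2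
    exact_mod_cast this
  have hFg : (F.card : ℝ) * (4*g) ≤ el/16 := by
    have h1 : (F.card : ℝ) ≤ δ * ((tpl+1) * 2^(j+2)) := by
      calc (F.card : ℝ) ≤ δ * ((m:ℝ)+1) := le_of_lt hFcard
        _ ≤ δ * ((tpl+1) * 2^(j+2)) := by
            apply mul_le_mul_of_nonneg_left hmB (le_of_lt hδ_pos)
    have htpl : (0:ℝ) < (tpl:ℝ)+1 := by positivity
    have h2 : δ * ((tpl+1) * 2^(j+2)) = (1/2:ℝ)^(B+8) * 2^(j+2) := by
      rw [hδ_def]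
      field_simp
    have h3 : (1/2:ℝ)^(B+8) * 2^(j+2) * (4*g) = el/16 := by
      rw [hg_def, hel_def]
      calc (1/2:ℝ)^(B+8) * 2^(j+2) * (4*(1/2)^j)
          = ((1/2:ℝ)^B) * ((1/2:ℝ)^j * 2^j) * ((1/2:ℝ)^8 * 2^2 * 4) := by
            rw [pow_add, pow_add]; ring
        _ = (1/2:ℝ)^B / 16 := by rw [e1]; ring_nf
    calc (F.card : ℝ) * (4*g) ≤ δ * ((tpl+1) * 2^(j+2)) * (4*g) := by
          apply mul_le_mul_of_nonneg_right h1 (by positivity)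
      _ = el/16 := by rw [h2]; exact h3
  -- tail sum bound
  have hS1 : ∑ d ∈ F, (1/2:ℝ)^(10*(d+1)) ≤ el/16 := by
    have hterm : ∀ d ∈ F, (1/2:ℝ)^(10*(d+1)) ≤ el * ((1/16:ℝ) * (1/2)^(d+1)) := by
      intro d hd
      have h1 : 2*B < 10*(d+1) := hFnew d hd
      have h2 : B + (d+1) + 4 ≤ 10*(d+1) := by omega
      calc (1/2:ℝ)^(10*(d+1)) ≤ (1/2:ℝ)^(B + (d+1) + 4) := by
            apply pow_le_pow_of_le_one (by norm_num) (by norm_num) h2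
        _ = el * ((1/16:ℝ) * (1/2)^(d+1)) := by
            rw [hel_def, pow_add, pow_add]
            norm_num
            ring
    calc ∑ d ∈ F, (1/2:ℝ)^(10*(d+1)) ≤ ∑ d ∈ F, el * ((1/16:ℝ) * (1/2)^(d+1)) :=
          Finset.sum_le_sum hterm
      _ = el/16 * ∑ d ∈ F, (1/2:ℝ)^(d+1) := by
          rw [Finset.mul_sum]
          congr 1; ext d; ring
      _ ≤ el/16 * 1 := by
          apply mul_le_mul_of_nonneg_left _ (by positivity)
          have hsub : F ⊆ Finset.range (hhf j) := Finset.filter_subset _ _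
          calc ∑ d ∈ F, (1/2:ℝ)^(d+1) ≤ ∑ d ∈ Finset.range (hhf j), (1/2:ℝ)^(d+1) := by
                apply Finset.sum_le_sum_of_subset_of_nonneg hsub
                intro i _ _; positivity
            _ = (1/2:ℝ) * ∑ d ∈ Finset.range (hhf j), (1/2:ℝ)^d := by
                rw [Finset.mul_sum]
                congr 1; ext d; rw [pow_succ]; ring
            _ ≤ (1/2:ℝ) * 2 := by
                apply mul_le_mul_of_nonneg_left _ (by norm_num)
                exact sum_geometric_two_le _
            _ = 1 := by norm_num
      _ = el/16 := by ring
  -- the bad set and the core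
  set center : ℕ → ℝ := fun d => if h : (J d).Nonempty then h.some else 0 with hcenter_def
  set ρ : ℕ → ℝ := fun d => (1/2:ℝ)^(10*(d+1)) + 2*g with hρ_def
  set Bad : Set ℝ := ⋃ d ∈ F, Set.Icc (center d - ρ d) (center d + ρ d) with hBad_def
  have hρ_nonneg : ∀ d : ℕ, 0 ≤ ρ d := by
    intro d; rw [hρ_def]; positivity
  have hBadVol : volume Bad ≤ ENNReal.ofReal (3*el/16) := by
    calc volume Bad ≤ ∑ d ∈ F, volume (Set.Icc (center d - ρ d) (center d + ρ d)) :=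
          measure_biUnion_finset_le F _
      _ = ∑ d ∈ F, ENNReal.ofReal (2 * ρ d) := by
          apply Finset.sum_congr rfl; intro d _
          rw [Real.volume_Icc]; congr 1; ring
      _ = ENNReal.ofReal (∑ d ∈ F, 2 * ρ d) := by
          rw [ENNReal.ofReal_sum_of_nonneg]
          intro d _
          have := hρ_nonneg d; linarith
      _ ≤ ENNReal.ofReal (3*el/16) := by
          apply ENNReal.ofReal_le_ofReal
          have hsum : ∑ d ∈ F, 2 * ρ d
              = 2 * (∑ d ∈ F, (1/2:ℝ)^(10*(d+1))) + (F.card:ℝ) * (4*g) := by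
            have hc : ∀ d ∈ F, 2 * ρ d = 2*(1/2:ℝ)^(10*(d+1)) + 4*g := by
              intro d _; rw [hρ_def]; ring
            rw [Finset.sum_congr rfl hc, Finset.sum_add_distrib, Finset.sum_const,
              ← Finset.mul_sum, nsmul_eq_mul]
          rw [hsum]
          nlinarith [hS1, hFg, hel_pos]
  -- extract a good point from the core
  set Core : Set ℝ := Set.Icc (c + 2*g) (c + el - 2*g) with hCore_def
  have hCoreVol : volume Core = ENNReal.ofReal (el - 4*g) := by
    rw [hCore_def, Real.volume_Icc]; congr 1; ring
  have hkey : volume (Core \ Bad) ≠ 0 := by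
    intro h0
    have hCsub : Core ⊆ (Core \ Bad) ∪ Bad := by
      intro x hx
      by_cases hb : x ∈ Bad
      · exact Set.mem_union_right _ hb
      · exact Set.mem_union_left _ ⟨hx, hb⟩
    have h1 : volume Core ≤ volume (Core \ Bad) + volume Bad :=
      le_trans (measure_mono hCsub) (measure_union_le _ _)
    rw [h0, zero_add] at h1
    have h2 : volume Core ≤ ENNReal.ofReal (3*el/16) := le_trans h1 hBadVol
    rw [hCoreVol] at h2
    have h3 : el - 4*g ≤ 3*el/16 := (ENNReal.ofReal_le_ofReal_iff (by positivity)).1 h2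
    nlinarith [hgel, hel_pos]
  obtain ⟨x₀, hx₀C, hx₀B⟩ := nonempty_of_measure_ne_zero hkey
  rw [hCore_def, Set.mem_Icc] at hx₀C
  obtain ⟨hx₀l, hx₀r⟩ := hx₀C
  have hx₀0 : 0 ≤ x₀ := by linarith [hg_pos]
  have hx₀1 : x₀ < 1 := by linarith [hg_pos, hc1]
  -- the grid point
  have h2jpos : (0:ℝ) < 2^j := by positivity
  obtain ⟨r, hrle, hrlt⟩ : ∃ r : ℕ, (r:ℝ) ≤ x₀ * 2^j ∧ x₀ * 2^j < (r:ℝ) + 1 :=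
    ⟨⌊x₀ * 2^j⌋₊, Nat.floor_le (by positivity), Nat.lt_floor_add_one _⟩
  have hr2j : r < 2^j := by
    have hmul : x₀ * 2^j < 2^j := by
      calc x₀ * 2^j < 1 * 2^j := mul_lt_mul_of_pos_right hx₀1 h2jpos
        _ = 2^j := one_mul _
    have h1 : (r:ℝ) < (2:ℝ)^j := lt_of_le_of_lt hrle hmul
    have h2 : (r:ℝ) < ((2^j : ℕ) : ℝ) := by push_cast; linarith
    exact_mod_cast h2
  set n : ℕ := 2^j + r with hn_def
  have han : aSeq n = (r:ℝ) * (1/2:ℝ)^j := aSeq_spec hr2j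
  have ex : x₀ * 2^j * (1/2:ℝ)^j = x₀ := by
    have h : (2:ℝ)^j * (1/2)^j = 1 := by rw [mul_comm]; exact e1
    calc x₀ * 2^j * (1/2:ℝ)^j = x₀ * ((2:ℝ)^j * (1/2)^j) := by ring
      _ = x₀ := by rw [h, mul_one]
  have ha_le : aSeq n ≤ x₀ := by
    rw [han]
    calc (r:ℝ) * (1/2:ℝ)^j ≤ x₀ * 2^j * (1/2:ℝ)^j :=
          mul_le_mul_of_nonneg_right hrle (by positivity)
      _ = x₀ := ex
  have ha_gt : x₀ < aSeq n + g := by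
    have h := mul_lt_mul_of_pos_right hrlt (show (0:ℝ) < (1/2:ℝ)^j by positivity)
    rw [ex] at h
    have hexp : ((r:ℝ)+1) * (1/2:ℝ)^j = (r:ℝ)*(1/2:ℝ)^j + (1/2:ℝ)^j := by ring
    rw [hexp] at h
    rw [han, hg_def]
    exact h
  -- the window
  set w : ℝ := (1/2:ℝ)^((tpl+1)*(n+1)) with hw_def
  have hw_pos : 0 < w := by rw [hw_def]; positivity
  have hn1 : n + 1 ≤ 2^(j+1) := by
    have : (2:ℕ)^(j+1) = 2^j + 2^j := by ring
    omega
  have hjn : j + 1 ≤ (tpl+1)*(n+1) := by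
    have h1 : j < 2^j := (Nat.lt_two_pow_self (n := j))
    have h2 : n + 1 ≤ (tpl+1)*(n+1) := Nat.le_mul_of_pos_left _ (by omega)
    omega
  have hwg : w ≤ g / 2 := by
    rw [hw_def, hg_def]
    calc (1/2:ℝ)^((tpl+1)*(n+1)) ≤ (1/2:ℝ)^(j+1) :=
          pow_le_pow_of_le_one (by norm_num) (by norm_num) hjn
      _ = (1/2:ℝ)^j / 2 := by rw [pow_succ]; ring
  have hWsubP : Set.Icc (aSeq n) (aSeq n + w) ⊆ Set.Icc c (c + el) := by
    intro z hz
    rw [Set.mem_Icc] at hz ⊢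
    obtain ⟨hz1, hz2⟩ := hz
    constructor
    · linarith [ha_gt, hx₀l, hg_pos]
    · linarith [ha_le, hx₀r, hwg, hg_pos]
  -- avoidance of the fresh blockers
  have havoid : ∀ d ∈ F, J d ∩ Set.Icc (aSeq n) (aSeq n + w) = ∅ := by
    intro d hd
    rw [Set.eq_empty_iff_forall_notMem]
    rintro z ⟨hz1, hz2⟩
    rw [Set.mem_Icc] at hz2
    obtain ⟨hz3, hz4⟩ := hz2
    have hne : (J d).Nonempty := ⟨z, hz1⟩
    have hyJ : center d ∈ J d := by
      rw [hcenter_def]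
      simp only
      rw [dif_pos hne]
      exact hne.some_mem
    have hdD := hFD d hd
    have hdiam : |z - center d| ≤ (1/2:ℝ)^(10*(d+1)) :=
      interval_diam (hJint d hdD) (by positivity) (hJvol d hdD) hz1 hyJ
    have hzx : |z - x₀| ≤ g := by
      rw [abs_le]
      constructor
      · linarith [ha_le, hwg, hg_pos]
      · linarith [ha_gt, hg_pos]
    have hx₀mem : x₀ ∈ Set.Icc (center d - ρ d) (center d + ρ d) := by
      rw [Set.mem_Icc, hρ_def]
      simp only
      have h1 := abs_le.1 hdiam
      have h2 := abs_le.1 hzx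
      constructor
      · linarith [h1.1, h1.2, h2.1, h2.2]
      · linarith [h1.1, h1.2, h2.1, h2.2]
    exact hx₀B (Set.mem_biUnion hd hx₀mem)
  -- assembly
  have hB'w : (1/2:ℝ)^((tpl+1)*(n+1)+2) = w/4 := by
    rw [pow_add, hw_def]; norm_num; ring
  have haw : aSeq n + w ≤ c + el := by
    have hmem : aSeq n + w ∈ Set.Icc (aSeq n) (aSeq n + w) :=
      Set.mem_Icc.2 ⟨by linarith [hw_pos], le_refl _⟩
    exact (Set.mem_Icc.1 (hWsubP hmem)).2
  have h2jB : B < 2^j := by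
    have h1 : j < 2^j := (Nat.lt_two_pow_self (n := j))
    omega
  have hnB : B < (tpl+1)*(n+1)+2 := by
    have h2 : n + 1 ≤ (tpl+1)*(n+1) := Nat.le_mul_of_pos_left _ (by omega)
    omega
  have hP'W : Set.Icc (aSeq n + w/4) (aSeq n + w/4 + (1/2:ℝ)^((tpl+1)*(n+1)+2))
      ⊆ Set.Icc (aSeq n) (aSeq n + w) := by
    rw [hB'w]
    intro z hz
    rw [Set.mem_Icc] at hz ⊢
    constructor
    · linarith [hz.1, hw_pos]
    · linarith [hz.2, hw_pos]
  refine ⟨aSeq n + w/4, (tpl+1)*(n+1)+2, ⟨?_, ?_, ?_, ?_⟩, hnB, ?_, n, rfl, ?_⟩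
  · -- 4 ≤ B'
    omega
  · -- 0 ≤ c'
    linarith [aSeq_nonneg n, hw_pos]
  · -- c' + len ≤ 1
    rw [hB'w]
    linarith [haw, hw_pos, hc1]
  · -- invariant
    intro d hdD hdB'
    rw [Set.eq_empty_iff_forall_notMem]
    rintro z ⟨hz1, hz2⟩
    by_cases hold : 10*(d+1) ≤ 2*B
    · have h0 := hinv d hdD hold
      have : z ∈ J d ∩ Set.Icc c (c + el) := ⟨hz1, hWsubP (hP'W hz2)⟩
      rw [h0] at this
      exact this
    · have hdF : d ∈ F := by
        rw [hF_def, Finset.mem_filter, Finset.mem_range]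
        refine ⟨?_, hdD, hold⟩
        have hb1 : (tpl+1)*(n+1) ≤ (tpl+1)*2^(j+1) := Nat.mul_le_mul_left _ hn1
        have hassoc : 2*(tpl+1)*2^(j+1) = 2*((tpl+1)*2^(j+1)) := by ring
        have hd1 : d + 1 ≤ hhf j := by
          apply hhf_mem j d
          omega
        omega
      have h0 := havoid d hdF
      have : z ∈ J d ∩ Set.Icc (aSeq n) (aSeq n + w) := ⟨hz1, hP'W hz2⟩
      rw [h0] at this
      exact this
  · -- nesting
    exact fun z hz => hWsubP (hP'W hz)
  · -- inside the open template window
    rw [hB'w]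
    intro z hz
    rw [Set.mem_Icc] at hz
    rw [Set.mem_Ioo]
    constructor
    · linarith [hz.1, hw_pos]
    · rw [← hw_def]
      linarith [hz.2, hw_pos]



-- DEV: recursion + final (to be appended)

lemma inv_init (D : Set ℕ) (J : ℕ → Set ℝ) : Inv D J 0 4 := by
  refine ⟨le_refl 4, le_refl 0, by norm_num, ?_⟩
  intro d _ hd
  omega

lemma hardness {D : Set ℕ} {J : ℕ → Set ℝ}
    (hJint : ∀ d ∈ D, (J d).OrdConnected)
    (hJvol : ∀ d ∈ D, volume (J d) ≤ ENNReal.ofReal ((1/2:ℝ)^(10*(d+1))))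
    (hdip : ∀ δ : ℝ, 0 < δ → ∀ N : ℕ, ∃ m, N ≤ m ∧
      ((D ∩ Set.Iic m).ncard : ℝ) < δ * ((m:ℝ)+1)) :
    ∃ x : ℝ, x ∈ M ∧ ∀ d ∈ D, x ∉ J d := by
  classical
  -- the step function
  have hstep : ∀ (t : ℕ) (s : {p : ℝ × ℕ // Inv D J p.1 p.2}),
      ∃ s' : {p : ℝ × ℕ // Inv D J p.1 p.2},
        s.1.2 < s'.1.2 ∧
        (Set.Icc s'.1.1 (s'.1.1 + (1/2:ℝ)^s'.1.2) ⊆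
          Set.Icc s.1.1 (s.1.1 + (1/2:ℝ)^s.1.2)) ∧
        ∃ n : ℕ, Set.Icc s'.1.1 (s'.1.1 + (1/2:ℝ)^s'.1.2) ⊆
          Set.Ioo (aSeq n) (aSeq n + (1/2:ℝ)^((t+1)*(n+1))) := by
    rintro t ⟨⟨c, B⟩, hI⟩
    obtain ⟨c', B', hI', hBB', hsub, n, _, hwin⟩ := dive hJint hJvol hdip t hI
    exact ⟨⟨(c', B'), hI'⟩, hBB', hsub, n, hwin⟩
  choose f hf1 hf2 hf3 using hstep
  -- the iteration
  let seq : ℕ → {p : ℝ × ℕ // Inv D J p.1 p.2} :=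
    fun t => Nat.rec ⟨(0, 4), inv_init D J⟩ (fun t ih => f t ih) t
  have hseq : ∀ t, seq (t+1) = f t (seq t) := fun t => rfl
  set cs : ℕ → ℝ := fun t => (seq t).1.1 with hcs
  set Bs : ℕ → ℕ := fun t => (seq t).1.2 with hBs
  set P : ℕ → Set ℝ := fun t => Set.Icc (cs t) (cs t + (1/2:ℝ)^(Bs t)) with hP
  have hmono : ∀ t, P (t+1) ⊆ P t := by
    intro t
    have := hf2 t (seq t)
    rw [← hseq t] at this
    exact this
  have hchain : ∀ t s, t ≤ s → P s ⊆ P t := by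
    intro t s hts
    induction s with
    | zero => have : t = 0 := by omega
              subst this; exact le_refl _
    | succ u ih =>
      rcases Nat.lt_or_ge t (u+1) with h | h
      · exact le_trans (hmono u) (ih (by omega))
      · have : t = u + 1 := by omega
        subst this; exact le_refl _
  have hBgrow : ∀ t, Bs t < Bs (t+1) := by
    intro t
    have := hf1 t (seq t)
    rw [← hseq t] at this
    exact this
  have hBge : ∀ t, 4 + t ≤ Bs t := by
    intro t
    induction t with
    | zero => exact le_refl _
    | succ u ih => have := hBgrow u; omega
  have hInv : ∀ t, Inv D J (cs t) (Bs t) := fun t => (seq t).2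
  -- c is monotone and bounded
  have hcP : ∀ t, cs t ∈ P t := by
    intro t
    rw [hP]
    simp only [Set.mem_Icc]
    constructor
    · exact le_refl _
    · have : (0:ℝ) ≤ (1/2:ℝ)^(Bs t) := by positivity
      linarith
  have hcmono : Monotone cs := by
    apply monotone_nat_of_le_succ
    intro t
    have := hmono t (hcP (t+1))
    rw [hP] at this
    exact this.1
  have hcbdd : BddAbove (Set.range cs) := by
    refine ⟨1, ?_⟩
    rintro y ⟨t, rfl⟩
    have h1 := (hInv t).2.2.1
    have : (0:ℝ) ≤ (1/2:ℝ)^(Bs t) := by positivity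
    linarith
  set x : ℝ := ⨆ t, cs t with hx
  have hxP : ∀ t, x ∈ P t := by
    intro t
    rw [hP]
    simp only [Set.mem_Icc]
    constructor
    · exact le_ciSup hcbdd t
    · apply ciSup_le
      intro s
      rcases le_total s t with h | h
      · have h2 : (0:ℝ) ≤ (1/2:ℝ)^(Bs t) := by positivity
        have := hcmono h
        linarith
      · have := (hchain t s h) (hcP s)
        rw [hP] at this
        exact this.2
  refine ⟨x, ?_, ?_⟩
  · -- x ∈ M
    intro k
    have h3 := hf3 k (seq k)
    rw [← hseq k] at h3
    obtain ⟨n, hn⟩ := h3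
    have := hn (hxP (k+1))
    rw [Set.mem_Ioo] at this
    exact ⟨n, this.1, this.2⟩
  · -- x avoids all J d
    intro d hd
    intro hxd
    have hB : 10*(d+1) ≤ 2*(Bs (10*(d+1))) := by
      have := hBge (10*(d+1))
      omega
    have hempty := (hInv (10*(d+1))).2.2.2 d hd hB
    have : x ∈ J d ∩ Set.Icc (cs (10*(d+1))) (cs (10*(d+1)) + (1/2:ℝ)^(Bs (10*(d+1)))) :=
      ⟨hxd, hxP (10*(d+1))⟩
    rw [hempty] at this
    exact this


end

end MicroHard

theorem exists_microscopic_without_lower_density_zero_cover :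
    ∃ M : Set ℝ, Bornology.IsBounded M ∧ Microscopic M ∧
      ∃ ε : ℝ, 0 < ε ∧
        ∀ D : Set ℕ, lowerDensity D = 0 →
          ∀ J : ℕ → Set ℝ,
            (∀ d ∈ D, IsIntervalSet (J d) ∧
              volume (J d) ≤ ENNReal.ofReal (ε ^ (d + 1))) →
            ¬ M ⊆ (⋃ d ∈ D, J d) := by
  refine ⟨MicroHard.M, MicroHard.M_bounded, MicroHard.M_microscopic,
    (1/2:ℝ)^10, by norm_num, ?_⟩
  intro D hD J hJ hsub
  have hdip : ∀ δ : ℝ, 0 < δ → ∀ N : ℕ, ∃ m, N ≤ m ∧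
      ((D ∩ Set.Iic m).ncard : ℝ) < δ * ((m:ℝ)+1) :=
    fun δ hδ N => MicroHard.dips hD δ hδ N
  have hJint : ∀ d ∈ D, (J d).OrdConnected := fun d hd => (hJ d hd).1
  have hJvol : ∀ d ∈ D, volume (J d) ≤ ENNReal.ofReal ((1/2:ℝ)^(10*(d+1))) := by
    intro d hd
    have h := (hJ d hd).2
    rwa [show ((1/2:ℝ)^10)^(d+1) = (1/2:ℝ)^(10*(d+1)) by rw [← pow_mul]] at h
  obtain ⟨x, hxM, hxJ⟩ := MicroHard.hardness hJint hJvol hdip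
  have hx := hsub hxM
  rw [Set.mem_iUnion₂] at hx
  obtain ⟨d, hd, hxd⟩ := hx
  exact hxJ d hd hxd
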